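/- For every ε > 0 there exists B(ε) < ∞ such that for every B > B(ε) there exists δ(ε,B) > 0 with the following property: for all sufficiently large N, ℙ( rank(X_N − X_N^B) ≥ εN ) ≤ e^{−δ(ε,B) N}, where X_N^B is the matrix with entries x_{ij} 1_{|x_{ij}| ≤ B a_N}. -/

import Mathlib

open MeasureTheory ProbabilityTheory Filter Topology Matrix
open scoped ENNReal NNReal BoundedContinuousFunction

noncomputable section

/-- The `N × N` real symmetric matrix built from the upper-triangular array
`(x i j)_{1 ≤ i ≤ j}`, evaluated at the sample point `ω`. -/
def symMat {Ω : Type} (x : ℕ → ℕ → Ω → ℝ) (ω : Ω) (N : ℕ) :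
    Matrix (Fin N) (Fin N) ℝ :=
  Matrix.of fun i j => x (min (i.1 + 1) (j.1 + 1)) (max (i.1 + 1) (j.1 + 1)) ω

/-- The eigenvalues of a real symmetric matrix (junk value `0` if not symmetric). -/
def evs {N : ℕ} (M : Matrix (Fin N) (Fin N) ℝ) : Fin N → ℝ :=
  letI := Classical.propDecidable
  if h : M.IsHermitian then h.eigenvalues else 0

/-- The tail probability `ℙ(|v| ≥ u)`. -/
def tailP {Ω : Type} [MeasureSpace Ω] (v : Ω → ℝ) (u : ℝ) : ℝ :=
  (ℙ {ω | u ≤ |v ω|}).toReal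

/-- The normalizing constant `a_N = inf {u > 0 : ℙ(|v| ≥ u) ≤ 1/N}`. -/
def aN {Ω : Type} [MeasureSpace Ω] (v : Ω → ℝ) (N : ℕ) : ℝ :=
  sInf {u : ℝ | 0 < u ∧ tailP v u ≤ 1 / N}


/-- The truncated, renormalized symmetric random matrix with entries
`a⁻¹ · x_{ij} 1_{|x_{ij}| ≤ c}`. -/
def truncMat {Ω : Type} (x : ℕ → ℕ → Ω → ℝ) (a c : ℝ) (ω : Ω) (N : ℕ) :
    Matrix (Fin N) (Fin N) ℝ :=
  Matrix.of fun i j =>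
    a⁻¹ * (if |x (min (i.1 + 1) (j.1 + 1)) (max (i.1 + 1) (j.1 + 1)) ω| ≤ c
      then x (min (i.1 + 1) (j.1 + 1)) (max (i.1 + 1) (j.1 + 1)) ω else 0)

/-! A nonzero row `i` of `X_N − X_N^B` contains an entry `x_{ij}` with `|x_{ij}| > B a_N`, so
the rank is at most twice the number `K` of such entries with `i ≤ j ≤ N`. Regular variation
gives `ℙ(|x_{11}| > B a_N) ≤ q / N` with `q → 0` as `B → ∞`, and by independence
`ℙ(K ≥ m) ≤ C(N², m) (q/N)^m ≤ (e N q / m)^m`. For `m = ⌈εN/2⌉` and `q ≤ ε / (2e²)` this is at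
most `e^{-m} ≤ e^{-εN/2}`. -/

open Finset

theorem choose_mul_pow_le_exp_neg {n m : ℕ} {q : ℝ} (hq : 0 ≤ q)
    (h : Real.exp 1 * n * q ≤ Real.exp (-1) * m) :
    (n.choose m : ℝ) * q ^ m ≤ Real.exp (-m) := by
  rcases m.eq_zero_or_pos with rfl | hm
  · simp
  have hm : (0 : ℝ) < m := by exact_mod_cast hm
  calc (n.choose m : ℝ) * q ^ m ≤ n ^ m / m.factorial * q ^ m := by
        gcongr; exact Nat.choose_le_pow_div m n
    _ = (n * q / m) ^ m * (m ^ m / m.factorial) := by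
        rw [div_pow, mul_pow]; field_simp
    _ ≤ (n * q / m) ^ m * Real.exp m := by
        gcongr; exact Real.pow_div_factorial_le_exp _ hm.le m
    _ = (Real.exp 1 * n * q / m) ^ m := by
        rw [← Real.exp_one_pow, ← mul_pow]; ring
    _ ≤ Real.exp (-1) ^ m := by
        gcongr; rwa [div_le_iff₀ hm]
    _ = Real.exp (-m) := by rw [← Real.exp_nat_mul]; ring_nf

open Classical in
theorem measure_le_card_filter_mem_le {Ω ι : Type*} [MeasurableSpace Ω] {μ : Measure Ω}
    {E : ι → Set Ω} (hE : iIndepSet E μ) (F : Finset ι) {p : ℝ≥0∞}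
    (hp : ∀ i ∈ F, μ (E i) ≤ p) (m : ℕ) :
    μ {ω | m ≤ #{i ∈ F | ω ∈ E i}} ≤ (#F).choose m * p ^ m := by
  have hcover : {ω | m ≤ #{i ∈ F | ω ∈ E i}} ⊆ ⋃ T ∈ F.powersetCard m, ⋂ i ∈ T, E i := by
    intro ω hω
    obtain ⟨T, hTsub, hTcard⟩ := exists_subset_card_eq hω
    refine Set.mem_biUnion (mem_powersetCard.2 ⟨hTsub.trans (filter_subset _ _), hTcard⟩) ?_
    exact Set.mem_iInter₂.2 fun i hi => (mem_filter.1 (hTsub hi)).2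
  calc μ {ω | m ≤ #{i ∈ F | ω ∈ E i}} ≤ ∑ T ∈ F.powersetCard m, μ (⋂ i ∈ T, E i) :=
        (measure_mono hcover).trans (measure_biUnion_finset_le _ _)
    _ = ∑ T ∈ F.powersetCard m, ∏ i ∈ T, μ (E i) := sum_congr rfl fun T _ => hE.meas_biInter T
    _ ≤ ∑ T ∈ F.powersetCard m, p ^ m := by
        refine sum_le_sum fun T hT => ?_
        obtain ⟨hTsub, hTcard⟩ := mem_powersetCard.1 hT
        calc ∏ i ∈ T, μ (E i) ≤ ∏ _i ∈ T, p := prod_le_prod' fun i hi => hp i (hTsub hi)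
          _ = p ^ m := by rw [prod_const, hTcard]
    _ = (#F).choose m * p ^ m := by rw [sum_const, card_powersetCard, nsmul_eq_mul]

section Tail

variable {Ω : Type} [MeasureSpace Ω] {v : Ω → ℝ} {α : ℝ} {L : ℝ → ℝ}

theorem eventually_tailP_pos_and_tailP_mul_le
    (hL : ∀ c > (0 : ℝ), Tendsto (fun t => L (c * t) / L t) atTop (𝓝 1))
    (htail : ∀ u > (0 : ℝ), tailP v u = L u / u ^ α) {b C : ℝ} (hb : 0 < b)
    (hC : (b ^ α)⁻¹ < C) :
    ∀ᶠ t in atTop, 0 < tailP v t ∧ tailP v (b * t) ≤ C * tailP v t := by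
  have hbα : 0 < b ^ α := Real.rpow_pos_of_pos hb α
  have hLne : ∀ᶠ t in atTop, L t ≠ 0 := by
    filter_upwards [(hL 1 one_pos).eventually_ne one_ne_zero] with t ht hLt
    simp [hLt] at ht
  have hratio : ∀ᶠ t in atTop, L (b * t) / L t < C * b ^ α :=
    (hL b hb).eventually_lt_const (by rwa [inv_lt_iff_one_lt_mul₀ hbα] at hC)
  filter_upwards [hLne, hratio, eventually_gt_atTop 0] with t hLt hr ht
  have htα : 0 < t ^ α := Real.rpow_pos_of_pos ht α
  have hpos : 0 < tailP v t :=
    (show 0 ≤ tailP v t from ENNReal.toReal_nonneg).lt_of_ne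
      (by rw [htail t ht]; exact (div_ne_zero hLt htα.ne').symm)
  refine ⟨hpos, ?_⟩
  have hfactor : tailP v (b * t) = L (b * t) / L t * (b ^ α)⁻¹ * tailP v t := by
    rw [htail _ (mul_pos hb ht), htail t ht, Real.mul_rpow hb.le ht.le]
    field_simp
  rw [hfactor]
  gcongr
  rw [mul_inv_le_iff₀ hbα]
  exact hr.le

variable [IsFiniteMeasure (ℙ : Measure Ω)]

theorem tailP_antitone (v : Ω → ℝ) : Antitone (tailP v) := fun _ _ huw =>
  ENNReal.toReal_mono (measure_ne_top _ _) (measure_mono fun _ hω => huw.trans hω)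

theorem measure_lt_abs_le_ofReal_tailP (v : Ω → ℝ) (c : ℝ) :
    ℙ {ω | c < |v ω|} ≤ ENNReal.ofReal (tailP v c) :=
  (measure_mono (Set.ofPred_subset_ofPred.2 fun _ => le_of_lt)).trans
    (ENNReal.ofReal_toReal (measure_ne_top _ _)).ge

theorem tendsto_tailP_atTop (hv : Measurable v) : Tendsto (tailP v) atTop (𝓝 0) := by
  have h := tendsto_measure_iInter_atTop (μ := ℙ) (s := fun u : ℝ => {ω | u ≤ |v ω|})
    (fun _ => (measurableSet_le measurable_const hv.abs).nullMeasurableSet)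
    (fun _ _ huw _ hω => huw.trans hω) ⟨0, measure_ne_top _ _⟩
  have hempty : ⋂ u : ℝ, {ω | u ≤ |v ω|} = ∅ :=
    Set.eq_empty_of_forall_notMem fun ω hω =>
      (lt_add_one |v ω|).not_ge (Set.mem_iInter.1 hω (|v ω| + 1))
  rw [hempty, measure_empty] at h
  exact (ENNReal.tendsto_toReal ENNReal.zero_ne_top).comp h

theorem exists_pos_tailP_le (hv : Measurable v) {N : ℕ} (hN : 0 < N) :
    ∃ u, 0 < u ∧ tailP v u ≤ 1 / N :=
  (((tendsto_tailP_atTop hv).eventually_lt_const (by positivity)).and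
    (eventually_gt_atTop 0)).exists.imp fun _ hu => ⟨hu.2, hu.1.le⟩

theorem tailP_le_of_aN_lt (hv : Measurable v) {N : ℕ} (hN : 0 < N) {u : ℝ}
    (hu : aN v N < u) : tailP v u ≤ 1 / N := by
  obtain ⟨w, hw, hwu⟩ :=
    (csInf_lt_iff ⟨0, fun _ hz => hz.1.le⟩ (exists_pos_tailP_le hv hN)).1 hu
  exact (tailP_antitone v hwu.le).trans hw.2

theorem le_aN_of_one_div_lt_tailP (hv : Measurable v) {N : ℕ} (hN : 0 < N) {t : ℝ}
    (ht : 1 / N < tailP v t) : t ≤ aN v N :=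
  le_csInf (exists_pos_tailP_le hv hN) fun _ hu =>
    le_of_not_gt fun hut => (ht.trans_le (tailP_antitone v hut.le)).not_ge hu.2

theorem eventually_tailP_mul_aN_le (hv : Measurable v)
    (hL : ∀ c > (0 : ℝ), Tendsto (fun t => L (c * t) / L t) atTop (𝓝 1))
    (htail : ∀ u > (0 : ℝ), tailP v u = L u / u ^ α) {B C : ℝ} (hB : 0 < B)
    (hC : ((B / 2) ^ α)⁻¹ < C) :
    ∀ᶠ N : ℕ in atTop, tailP v (B * aN v N) ≤ C / N := by
  obtain ⟨T, hT⟩ := ((eventually_tailP_pos_and_tailP_mul_le hL htail (half_pos hB) hC).and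
    (eventually_gt_atTop 0)).exists_forall_of_atTop
  filter_upwards [tendsto_one_div_atTop_nhds_zero_nat.eventually_lt_const (hT T le_rfl).1.1,
    eventually_gt_atTop 0] with N hN hN0
  -- `tailP v (aN v N)` itself may exceed `1 / N` (the tail is only left-continuous),
  -- hence the detour through `2 * aN v N`.
  have ha : 0 < aN v N := (hT T le_rfl).2.trans_le (le_aN_of_one_div_lt_tailP hv hN0 hN)
  have hC0 : 0 ≤ C := (inv_pos.2 (Real.rpow_pos_of_pos (half_pos hB) α)).le.trans hC.le
  calc tailP v (B * aN v N) = tailP v (B / 2 * (2 * aN v N)) := by ring_nf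
    _ ≤ C * tailP v (2 * aN v N) := (hT _ (by linarith [le_aN_of_one_div_lt_tailP hv hN0 hN])).1.2
    _ ≤ C * (1 / N) := by gcongr; exact tailP_le_of_aN_lt hv hN0 (by linarith)
    _ = C / N := by ring

end Tail

def upperPairs (N : ℕ) : Finset {p : ℕ × ℕ // 1 ≤ p.1 ∧ p.1 ≤ p.2} :=
  (Icc 1 N ×ˢ Icc 1 N).subtype _

theorem card_upperPairs_le (N : ℕ) : #(upperPairs N) ≤ N ^ 2 :=
  (card_subtype _ _).le.trans ((card_filter_le _ _).trans (by simp [sq]))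

theorem rank_symMat_sub_truncMat_le {Ω : Type} (x : ℕ → ℕ → Ω → ℝ) (c : ℝ) (ω : Ω) (N : ℕ) :
    (symMat x ω N - truncMat x 1 c ω N).rank ≤
      2 * #{q ∈ upperPairs N | c < |x q.1.1 q.1.2 ω|} := by
  set G := {q ∈ upperPairs N | c < |x q.1.1 q.1.2 ω|}
  set s : Finset (Fin N) := {i | i.1 + 1 ∈ G.image (·.1.1) ∪ G.image (·.1.2)}
  have hrows : Function.support (symMat x ω N - truncMat x 1 c ω N).row ⊆ s := by
    intro i hi
    obtain ⟨j, hj⟩ : ∃ j, (symMat x ω N - truncMat x 1 c ω N) i j ≠ 0 := by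
      simpa [funext_iff] using hi
    have hexc : c < |x (min (i.1 + 1) (j.1 + 1)) (max (i.1 + 1) (j.1 + 1)) ω| := by
      by_contra h
      exact hj (by simp only [Matrix.sub_apply, symMat, truncMat, of_apply, inv_one, one_mul,
        if_pos (not_lt.1 h), sub_self])
    have hq : (⟨(min (i.1 + 1) (j.1 + 1), max (i.1 + 1) (j.1 + 1)), by omega, min_le_max⟩ :
        {p : ℕ × ℕ // 1 ≤ p.1 ∧ p.1 ≤ p.2}) ∈ G := by
      simp only [G, upperPairs, mem_filter, mem_subtype, mem_product, mem_Icc]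
      exact ⟨by omega, hexc⟩
    simp only [s, mem_coe, mem_filter, mem_univ, true_and, mem_union, mem_image]
    rcases le_total i j with hij | hij
    · exact Or.inl ⟨_, hq, min_eq_left (by omega)⟩
    · exact Or.inr ⟨_, hq, max_eq_left (by omega)⟩
  calc (symMat x ω N - truncMat x 1 c ω N).rank ≤ #s := rank_le_card_of_support_subset _ _ hrows
    _ ≤ #(G.image (·.1.1) ∪ G.image (·.1.2)) :=
        card_le_card_of_injOn (fun i => i.1 + 1) (fun i hi => (mem_filter.1 hi).2)
          fun i _ j _ h => Fin.ext (by simpa using h)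
    _ ≤ #G + #G := (card_union_le _ _).trans (add_le_add card_image_le card_image_le)
    _ = 2 * #G := (two_mul _).symm

theorem measure_le_rank_symMat_sub_truncMat_le {Ω : Type} [MeasureSpace Ω]
    (x : ℕ → ℕ → Ω → ℝ) (hmeas : ∀ i j, Measurable (x i j))
    (hident : ∀ i j : ℕ, 1 ≤ i → i ≤ j → Measure.map (x i j) ℙ = Measure.map (x 1 1) ℙ)
    (hindep : iIndepFun (fun p : {p : ℕ × ℕ // 1 ≤ p.1 ∧ p.1 ≤ p.2} => x p.1.1 p.1.2) ℙ)
    (c : ℝ) (N : ℕ) (t : ℝ) :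
    ℙ {ω | t ≤ ((symMat x ω N - truncMat x 1 c ω N).rank : ℝ)} ≤
      (N ^ 2).choose ⌈t / 2⌉₊ * ℙ {ω | c < |x 1 1 ω|} ^ ⌈t / 2⌉₊ := by
  classical
  set S : Set ℝ := {y | c < |y|}
  have hS : MeasurableSet S := measurableSet_lt measurable_const measurable_abs
  set E : {p : ℕ × ℕ // 1 ≤ p.1 ∧ p.1 ≤ p.2} → Set Ω := fun q => x q.1.1 q.1.2 ⁻¹' S
  have hE : iIndepSet E ℙ := (iIndepSet_iff_meas_biInter fun q => hmeas _ _ hS).2 fun T =>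
    hindep.meas_biInter fun _ _ => ⟨S, hS, rfl⟩
  have hprob : ∀ q, ℙ (E q) = ℙ {ω | c < |x 1 1 ω|} := fun q => by
    rw [← Measure.map_apply (hmeas _ _) hS, hident _ _ q.2.1 q.2.2,
      Measure.map_apply (hmeas _ _) hS]
    rfl
  have hsub : {ω | t ≤ ((symMat x ω N - truncMat x 1 c ω N).rank : ℝ)} ⊆
      {ω | ⌈t / 2⌉₊ ≤ #{q ∈ upperPairs N | ω ∈ E q}} := fun ω hω => by
    have hrank : ((symMat x ω N - truncMat x 1 c ω N).rank : ℝ) ≤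
        2 * #{q ∈ upperPairs N | ω ∈ E q} := by
      exact_mod_cast rank_symMat_sub_truncMat_le x c ω N
    exact Nat.ceil_le.2 (by change t ≤ _ at hω; linarith)
  calc _ ≤ _ := measure_mono hsub
    _ ≤ _ := measure_le_card_filter_mem_le hE _ (fun q _ => (hprob q).le) _
    _ ≤ _ := by gcongr; exact card_upperPairs_le N

theorem measure_le_rank_symMat_sub_truncMat_le_exp_neg {Ω : Type} [MeasureSpace Ω]
    [IsProbabilityMeasure (ℙ : Measure Ω)]
    (x : ℕ → ℕ → Ω → ℝ) (hmeas : ∀ i j, Measurable (x i j))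
    (hident : ∀ i j : ℕ, 1 ≤ i → i ≤ j → Measure.map (x i j) ℙ = Measure.map (x 1 1) ℙ)
    (hindep : iIndepFun (fun p : {p : ℕ × ℕ // 1 ≤ p.1 ∧ p.1 ≤ p.2} => x p.1.1 p.1.2) ℙ)
    {ε c : ℝ} (hε : 0 < ε) {N : ℕ}
    (hc : tailP (x 1 1) c ≤ ε / (2 * Real.exp 2) / N) :
    ℙ {ω | ε * N ≤ ((symMat x ω N - truncMat x 1 c ω N).rank : ℝ)} ≤
      ENNReal.ofReal (Real.exp (-(ε / 2) * N)) := by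
  set m := ⌈ε * N / 2⌉₊
  set q := ε / (2 * Real.exp 2) / N with hq
  have hbinom : ((N ^ 2).choose m : ℝ) * q ^ m ≤ Real.exp (-m) := by
    refine choose_mul_pow_le_exp_neg (by positivity) ?_
    have hexp : Real.exp 1 * ((N ^ 2 : ℕ) : ℝ) * q = Real.exp (-1) * (ε * N / 2) := by
      rw [hq, show Real.exp 2 = Real.exp 1 * Real.exp 1 by rw [← Real.exp_add]; norm_num,
        Real.exp_neg]
      push_cast
      field_simp
    rw [hexp]
    gcongr
    exact Nat.le_ceil _
  calc _ ≤ (N ^ 2).choose m * ℙ {ω | c < |x 1 1 ω|} ^ m :=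
        measure_le_rank_symMat_sub_truncMat_le x hmeas hident hindep c N _
    _ ≤ (N ^ 2).choose m * ENNReal.ofReal q ^ m := by
        gcongr
        exact (measure_lt_abs_le_ofReal_tailP _ c).trans (ENNReal.ofReal_le_ofReal hc)
    _ = ENNReal.ofReal ((N ^ 2).choose m * q ^ m) := by
        rw [ENNReal.ofReal_mul (by positivity), ENNReal.ofReal_pow (by positivity),
          ENNReal.ofReal_natCast]
    _ ≤ ENNReal.ofReal (Real.exp (-(ε / 2) * N)) :=
        ENNReal.ofReal_le_ofReal (hbinom.trans (Real.exp_le_exp.2 (by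
          linarith [Nat.le_ceil (ε * N / 2)])))

/-- **Lemma 2.4 (1)**: for every `ε > 0` there is `B(ε) < ∞` such that for every
`B > B(ε)` there is `δ(ε,B) > 0` with
`ℙ(rank(X_N − X_N^B) ≥ εN) ≤ e^{−δ(ε,B) N}` for all large `N`. -/
theorem rank_truncation_exponential_bound
    (α : ℝ) (hα : α ∈ Set.Ioo (0 : ℝ) 2)
    (Ω : Type) [MeasureSpace Ω] [IsProbabilityMeasure (ℙ : Measure Ω)]
    (x : ℕ → ℕ → Ω → ℝ) (L : ℝ → ℝ)
    (hmeas : ∀ i j, Measurable (x i j))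
    (hident : ∀ i j : ℕ, 1 ≤ i → i ≤ j →
      Measure.map (x i j) ℙ = Measure.map (x 1 1) ℙ)
    (hindep : iIndepFun
      (fun p : {p : ℕ × ℕ // 1 ≤ p.1 ∧ p.1 ≤ p.2} => x p.1.1 p.1.2) ℙ)
    (hL : ∀ c > (0 : ℝ), Tendsto (fun t => L (c * t) / L t) atTop (𝓝 1))
    (htail : ∀ u > (0 : ℝ), tailP (x 1 1) u = L u / u ^ α) :
    ∀ ε > (0 : ℝ), ∃ B₀ : ℝ, ∀ B > B₀, ∃ δ > (0 : ℝ), ∃ N₀ : ℕ, ∀ N ≥ N₀,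
      ℙ {ω : Ω |
          ε * N ≤
            ((symMat x ω N - truncMat x 1 (B * aN (x 1 1) N) ω N).rank : ℝ)}
        ≤ ENNReal.ofReal (Real.exp (-δ * N)) := by
  intro ε hε
  set K := 2 * Real.exp 2 / ε
  refine ⟨2 * K ^ α⁻¹, fun B hB => ?_⟩
  have hB0 : 0 < B := lt_of_le_of_lt (by positivity) hB
  have hC : ((B / 2) ^ α)⁻¹ < ε / (2 * Real.exp 2) := by
    have hK : K < (B / 2) ^ α :=
      (Real.rpow_inv_lt_iff_of_pos (by positivity) (by positivity) hα.1).1 (by linarith)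
    rwa [inv_lt_comm₀ (by positivity) (by positivity), inv_div]
  obtain ⟨N₀, hN₀⟩ :=
    eventually_atTop.1 (eventually_tailP_mul_aN_le (hmeas 1 1) hL htail hB0 hC)
  exact ⟨ε / 2, half_pos hε, N₀, fun N hN =>
    measure_le_rank_symMat_sub_truncMat_le_exp_neg x hmeas hident hindep hε (hN₀ N hN)⟩
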